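/- arXiv:2512.06786 — 3 statements merged into one kernel-verified Lean document; each statement's English description precedes it below -/
import Mathlib

section
/- Let p ∈ (0, 1/2]. If f ∈ F₃(p) is supported on exactly two points {x, y} ⊆ {0,1}³ with (0,0,0) ∉ {x,y} and (1,1,1) ∉ {x,y}, then p = 1/2. (Equivalently: for p < 1/2 there is no f ∈ F₃(p) with support of size two contained in the set of x with x₁+x₂+x₃ ∈ {1,2}.) -/
open Finset

abbrev Cube := Bool × Bool × Bool

def B (t : Bool) : ℝ := if t then 1 else 0

def levN (x : Cube) : ℕ := (cond x.1 1 0) + (cond x.2.1 1 0) + (cond x.2.2 1 0)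

def memF3 (p : ℝ) (f : Cube → ℝ) : Prop :=
  (∀ x, 0 ≤ f x) ∧ (∑ x : Cube, f x = 1) ∧
  (∑ x : Cube, B x.1 * f x = p) ∧
  (∑ x : Cube, B x.2.1 * f x = p) ∧
  (∑ x : Cube, B x.2.2 * f x = p)

def E12 (f : Cube → ℝ) : ℝ := ∑ x : Cube, B x.1 * B x.2.1 * f x
def E13 (f : Cube → ℝ) : ℝ := ∑ x : Cube, B x.1 * B x.2.2 * f x
def E23 (f : Cube → ℝ) : ℝ := ∑ x : Cube, B x.2.1 * B x.2.2 * f x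

def ES (f : Cube → ℝ) : ℝ := ∑ x : Cube, (levN x : ℝ) * f x
def ES2 (f : Cube → ℝ) : ℝ := ∑ x : Cube, ((levN x : ℝ))^2 * f x

theorem stmt5 (p : ℝ) (hp : 0 < p) (hp' : p ≤ 1/2) (f : Cube → ℝ)
    (hf : memF3 p f) (x y : Cube) (hxy : x ≠ y)
    (hsupp : ∀ z : Cube, f z ≠ 0 ↔ (z = x ∨ z = y))
    (hx0 : x ≠ (false, false, false)) (hx1 : x ≠ (true, true, true))
    (hy0 : y ≠ (false, false, false)) (hy1 : y ≠ (true, true, true)) :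
    p = 1/2 := by
  obtain ⟨hnn, hsum, h1, h2, h3⟩ := hf
  have hz : ∀ z : Cube, z ≠ x → z ≠ y → f z = 0 := by
    intro z hzx hzy
    by_contra h
    rcases (hsupp z).mp h with rfl | rfl
    · exact hzx rfl
    · exact hzy rfl
  simp only [Fintype.sum_prod_type, Fintype.sum_bool, B, if_true, if_false] at hsum h1 h2 h3
  obtain ⟨a, b, c⟩ := x
  obtain ⟨d, e, g⟩ := y
  rcases a <;> rcases b <;> rcases c <;> rcases d <;> rcases e <;> rcases g <;>
    first
      | exact absurd rfl hxy
      | exact absurd rfl hx0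
      | exact absurd rfl hx1
      | exact absurd rfl hy0
      | exact absurd rfl hy1
      | · try have z1 := hz (false, false, false) (by decide) (by decide)
          try have z2 := hz (false, false, true) (by decide) (by decide)
          try have z3 := hz (false, true, false) (by decide) (by decide)
          try have z4 := hz (false, true, true) (by decide) (by decide)
          try have z5 := hz (true, false, false) (by decide) (by decide)
          try have z6 := hz (true, false, true) (by decide) (by decide)
          try have z7 := hz (true, true, false) (by decide) (by decide)
          try have z8 := hz (true, true, true) (by decide) (by decide)
          norm_num at h1 h2 h3
          linarith
end

section
/- Let p ∈ (0, 1/2] and let f ∈ F₃(p) satisfy f(0,0,0) > 0 and f(1,1,1) > 0 and f(x) = 0 for all x with x₁+x₂+x₃ = 2 (i.e., the sum S = X₁+X₂+X₃ has support contained in {0,1,3}). Then there is no such f with support of size at most 4 whose support meets level 1 (that is, there is no f ∈ F₃(p) with |supp(f)| ≤ 4 whose support meets level 0, level 1 and level 3 but not level 2). -/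
open Finset

theorem stmt6 (p : ℝ) (hp : 0 < p) (hp' : p ≤ 1/2) :
    ¬ ∃ f : Cube → ℝ, memF3 p f ∧
      ({x : Cube | f x ≠ 0} : Set Cube).ncard ≤ 4 ∧
      (∃ x : Cube, levN x = 0 ∧ f x ≠ 0) ∧
      (∃ x : Cube, levN x = 1 ∧ f x ≠ 0) ∧
      (∃ x : Cube, levN x = 3 ∧ f x ≠ 0) ∧
      (∀ x : Cube, levN x = 2 → f x = 0) := by
  rintro ⟨f, ⟨hpos, hsum, h1, h2, h3⟩, hcard, ⟨x0, hx0, hf0⟩, ⟨x1, hx1, hf1⟩, ⟨x3, hx3, hf3⟩, h2z⟩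
  have z1 : f (true, true, false) = 0 := h2z _ rfl
  have z2 : f (true, false, true) = 0 := h2z _ rfl
  have z3 : f (false, true, true) = 0 := h2z _ rfl
  simp only [Fintype.sum_prod_type, Fintype.sum_bool, B, if_true, if_false,
    one_mul, zero_mul, add_zero, zero_add, Bool.false_eq_true] at h1 h2 h3
  norm_num at h1 h2 h3
  rw [z1, z2] at h1
  rw [z1, z3] at h2
  rw [z2, z3] at h3
  -- h1 : f (true,true,true) + f (true,false,false) = p, etc (ordering may vary)
  have e1 : f (true, false, false) = p - f (true, true, true) := by linarith
  have e2 : f (false, true, false) = p - f (true, true, true) := by linarith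
  have e3 : f (false, false, true) = p - f (true, true, true) := by linarith
  have hx0' : x0 = (false, false, false) := by
    revert hx0; rcases x0 with ⟨a, b, c⟩; cases a <;> cases b <;> cases c <;> simp [levN]
  have hx3' : x3 = (true, true, true) := by
    revert hx3; rcases x3 with ⟨a, b, c⟩; cases a <;> cases b <;> cases c <;> simp [levN]
  subst hx0' hx3'
  have hne : p - f (true, true, true) ≠ 0 := by
    rcases x1 with ⟨a, b, c⟩
    cases a <;> cases b <;> cases c <;> simp [levN] at hx1 <;>
      first
      | (rw [e1] at hf1; exact hf1)
      | (rw [e2] at hf1; exact hf1)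
      | (rw [e3] at hf1; exact hf1)
  have hsub : (↑({(false,false,false), (true,false,false), (false,true,false),
      (false,false,true), (true,true,true)} : Finset Cube) : Set Cube)
      ⊆ {x : Cube | f x ≠ 0} := by
    intro x hx
    simp only [Finset.coe_insert, Finset.coe_singleton, Set.mem_insert_iff,
      Set.mem_singleton_iff] at hx
    rcases hx with rfl | rfl | rfl | rfl | rfl
    · exact hf0
    · rw [Set.mem_setOf_eq, e1]; exact hne
    · rw [Set.mem_setOf_eq, e2]; exact hne
    · rw [Set.mem_setOf_eq, e3]; exact hne
    · exact hf3
  have h5 : 5 ≤ ({x : Cube | f x ≠ 0} : Set Cube).ncard := by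
    have := Set.ncard_le_ncard hsub (Set.toFinite _)
    rwa [Set.ncard_coe_finset] at this
  omega
end

section
/- Let p ∈ (0, 1/2], let x ∈ {0,1}³ with x₁+x₂+x₃ = 1, and let 0 < θ < p. The pmf f defined by f(0,0,0) = 1−2p+θ, f(x) = p−θ, f(1−x) = p−θ, f(1,1,1) = θ (and 0 elsewhere) belongs to F₃(p), and f is a nontrivial convex combination of two other distinct elements of F₃(p); hence f is not an extremal point of F₃(p). -/
open Finset

def compl3 (x : Cube) : Cube := (!x.1, !x.2.1, !x.2.2)

def f7 (p θ : ℝ) (x : Cube) : Cube → ℝ := fun z =>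
  if z = (false, false, false) then 1 - 2*p + θ
  else if z = x then p - θ
  else if z = compl3 x then p - θ
  else if z = (true, true, true) then θ
  else 0

lemma memF3_f7 (p θ : ℝ) (hp' : p ≤ 1/2) (hθ : 0 < θ) (hθp : θ < p)
    (x : Cube) (hx : levN x = 1) : memF3 p (f7 p θ x) := by
  obtain ⟨a,b,c⟩ := x
  cases a <;> cases b <;> cases c <;> simp [levN] at hx <;>
    refine ⟨fun z => ?_, ?_, ?_, ?_, ?_⟩ <;>
    first
      | (obtain ⟨u,v,w⟩ := z; cases u <;> cases v <;> cases w <;>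
          (simp [f7, compl3]; try linarith))
      | (simp [Fintype.sum_prod_type, f7, compl3, B]; try ring_nf; try linarith)

theorem stmt7 (p θ : ℝ) (hp : 0 < p) (hp' : p ≤ 1/2) (hθ : 0 < θ) (hθp : θ < p)
    (x : Cube) (hx : levN x = 1) :
    memF3 p (f7 p θ x) ∧
    ∃ g h : Cube → ℝ, ∃ l : ℝ, memF3 p g ∧ memF3 p h ∧ g ≠ h ∧ 0 < l ∧ l < 1 ∧
      (∀ z : Cube, f7 p θ x z = l * g z + (1 - l) * h z) := by
  have hε : (0:ℝ) < min θ (p - θ) / 2 := by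
    have := lt_min hθ (by linarith : (0:ℝ) < p - θ)
    linarith
  set ε := min θ (p - θ) / 2 with hεdef
  have hε1 : ε ≤ θ / 2 := by
    have := min_le_left θ (p - θ); simp [hεdef]; linarith
  have hε2 : ε ≤ (p - θ) / 2 := by
    have := min_le_right θ (p - θ); simp [hεdef]; linarith
  refine ⟨memF3_f7 p θ hp' hθ hθp x hx, f7 p (θ + ε) x, f7 p (θ - ε) x, 1/2,
    memF3_f7 p (θ + ε) hp' (by linarith) (by linarith) x hx,
    memF3_f7 p (θ - ε) hp' (by linarith) (by linarith) x hx, ?_, by norm_num, by norm_num,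
    fun z => ?_⟩
  · intro hgh
    have h1 : f7 p (θ + ε) x (true, true, true) = f7 p (θ - ε) x (true, true, true) := by
      rw [hgh]
    obtain ⟨a,b,c⟩ := x
    cases a <;> cases b <;> cases c <;> simp [levN] at hx <;>
      simp [f7, compl3] at h1 <;> linarith
  · simp only [f7]
    split_ifs <;> ring
end
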